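/- Decomposition of a symmetric rank-two spinor-valued homogeneous polynomial (identity (4.9) of the paper): let n ≥ 1 and let W_{αβ} ∈ ℂ[y¹,y²] (α,β ∈ {1,2}) be homogeneous polynomials of degree n with W_{12} = W_{21}. Define ŷ_α := ε_{αβ}y^β (so ŷ₁ = y², ŷ₂ = −y¹), D_β := ∂₁W_{2β} − ∂₂W_{1β}, P := Σ_{γ,δ} y^γ y^δ W_{γδ}, R := Σ_δ y^δ D_δ, and Q := ∂₁D₂ − ∂₂D₁, where ∂_α := ∂/∂y^α. Then for all α, β ∈ {1,2}: W_{αβ} = (1/((n+1)(n+2)))·∂_α∂_β P − (1/(n(n+2)))·(ŷ_α ∂_β R + ŷ_β ∂_α R) + (1/(n(n+1)))·ŷ_α ŷ_β Q. -/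

import Mathlib

/-!
Identity (4.9) of the paper: decomposition of a symmetric rank-two
spinor-valued homogeneous polynomial.  We work in
ℂ[y¹,y²] = `MvPolynomial (Fin 2) ℂ`, with `X 0 = y¹`, `X 1 = y²`,
`∂_α = pderiv α`.
-/

open MvPolynomial

noncomputable section

/-- `ŷ_α := ε_{αβ} y^β`, i.e. `ŷ₁ = y²`, `ŷ₂ = −y¹`. -/
def yh (α : Fin 2) : MvPolynomial (Fin 2) ℂ := if α = 0 then X 1 else -X 0

/-- `D_β := ∂₁ W_{2β} − ∂₂ W_{1β}`. -/
def Dof (W : Fin 2 → Fin 2 → MvPolynomial (Fin 2) ℂ) (β : Fin 2) :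
    MvPolynomial (Fin 2) ℂ :=
  pderiv 0 (W 1 β) - pderiv 1 (W 0 β)

-- commutativity of partial derivatives
theorem pderiv_comm' {σ : Type*} {R : Type*} [CommSemiring R] (i j : σ)
    (f : MvPolynomial σ R) :
    pderiv i (pderiv j f) = pderiv j (pderiv i f) := by
  classical
  induction f using MvPolynomial.induction_on' with
  | monomial d c =>
    rcases eq_or_ne i j with rfl | hij
    · rfl
    · simp only [pderiv_monomial]
      rw [show d - Finsupp.single j 1 - Finsupp.single i 1
            = d - Finsupp.single i 1 - Finsupp.single j 1 by
          ext k; simp only [Finsupp.tsub_apply]; omega]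
      congr 1
      have h1 : (d - Finsupp.single j 1 : σ →₀ ℕ) i = d i := by
        rw [Finsupp.tsub_apply, Finsupp.single_apply, if_neg hij.symm, Nat.sub_zero]
      have h2 : (d - Finsupp.single i 1 : σ →₀ ℕ) j = d j := by
        rw [Finsupp.tsub_apply, Finsupp.single_apply, if_neg hij, Nat.sub_zero]
      rw [h1, h2]; ring
  | add p q hp hq => simp [hp, hq]

theorem X_mul_pderiv_monomial {d : Fin 2 →₀ ℕ} {c : ℂ} (i : Fin 2) :
    X i * pderiv i (monomial d c) = C ((d i : ℂ)) * monomial d c := by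
  rw [pderiv_monomial, C_mul_monomial]
  rcases eq_or_ne (d i) 0 with h | h
  · simp [h]
  · rw [X, monomial_mul, one_mul]
    congr 1
    · rw [add_tsub_cancel_of_le]
      simpa [Finsupp.single_le_iff] using Nat.one_le_iff_ne_zero.mpr h
    · ring

theorem euler₂ {m : ℕ} {f : MvPolynomial (Fin 2) ℂ} (hf : f.IsHomogeneous m) :
    X 0 * pderiv 0 f + X 1 * pderiv 1 f = C ((m : ℂ)) * f := by
  conv_lhs => rw [f.as_sum]
  conv_rhs => rw [f.as_sum]
  rw [map_sum, map_sum, Finset.mul_sum, Finset.mul_sum, Finset.mul_sum,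
    ← Finset.sum_add_distrib]
  refine Finset.sum_congr rfl fun d hd => ?_
  rw [X_mul_pderiv_monomial, X_mul_pderiv_monomial, ← add_mul, ← map_add]
  have hdeg : d 0 + d 1 = m := by
    have h1 : (Finsupp.weight 1) d = m := hf (mem_support_iff.mp hd)
    change (Finsupp.weight (fun _ => 1)) d = m at h1
    rw [← Finsupp.degree_eq_weight_one] at h1
    rw [← h1, Finsupp.degree]
    change d 0 + d 1 = ∑ i ∈ d.support, d i
    rw [Finset.sum_subset (Finset.subset_univ d.support)
      (fun i _ h => Finsupp.notMem_support_iff.mp h), Fin.sum_univ_two]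
  rw [← hdeg]; push_cast; ring_nf

-- Euler for the derivative, canonical mixed partial: pderiv 0 (pderiv 1 f)
theorem euler_d0 {c : ℂ} {f : MvPolynomial (Fin 2) ℂ}
    (h : X 0 * pderiv 0 f + X 1 * pderiv 1 f = C c * f) :
    X 0 * pderiv 0 (pderiv 0 f) + X 1 * pderiv 0 (pderiv 1 f)
      = (C c - 1) * pderiv 0 f := by
  have h0 := congrArg (pderiv 0) h
  simp only [map_add, pderiv_mul, pderiv_X_self, pderiv_X_of_ne (show (1:Fin 2) ≠ 0 by decide),
    pderiv_C_mul, pderiv_C, one_mul, zero_mul, zero_add] at h0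
  linear_combination h0

theorem euler_d1 {c : ℂ} {f : MvPolynomial (Fin 2) ℂ}
    (h : X 0 * pderiv 0 f + X 1 * pderiv 1 f = C c * f) :
    X 0 * pderiv 0 (pderiv 1 f) + X 1 * pderiv 1 (pderiv 1 f)
      = (C c - 1) * pderiv 1 f := by
  have h1 := congrArg (pderiv 1) h
  simp only [map_add, pderiv_mul, pderiv_X_self, pderiv_X_of_ne (show (0:Fin 2) ≠ 1 by decide),
    pderiv_C_mul, pderiv_C, one_mul, zero_mul, zero_add] at h1
  rw [pderiv_comm' 1 0 f] at h1
  linear_combination h1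

theorem pcomm10 (f : MvPolynomial (Fin 2) ℂ) :
    pderiv 1 (pderiv 0 f) = pderiv 0 (pderiv 1 f) := pderiv_comm' 1 0 f

theorem pd01 : pderiv (0 : Fin 2) (X 1 : MvPolynomial (Fin 2) ℂ) = 0 :=
  pderiv_X_of_ne (by decide)
theorem pd10 : pderiv (1 : Fin 2) (X 0 : MvPolynomial (Fin 2) ℂ) = 0 :=
  pderiv_X_of_ne (by decide)
theorem yh0 : yh 0 = X 1 := if_pos rfl
theorem yh1 : yh 1 = -X 0 := if_neg (by decide)

/-- For `n ≥ 1` and `W_{αβ}` symmetric, homogeneous of degree `n`: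
`W_{αβ} = (1/((n+1)(n+2))) ∂_α∂_β P − (1/(n(n+2))) (ŷ_α ∂_β R + ŷ_β ∂_α R)
          + (1/(n(n+1))) ŷ_α ŷ_β Q`,
where `P = y^γ y^δ W_{γδ}`, `R = y^δ D_δ`, `Q = ∂₁D₂ − ∂₂D₁`. -/
theorem rank_two_spinor_decomposition (n : ℕ) (hn : 1 ≤ n)
    (W : Fin 2 → Fin 2 → MvPolynomial (Fin 2) ℂ)
    (hhom : ∀ α β, (W α β).IsHomogeneous n) (hsym : W 0 1 = W 1 0) :
    ∀ α β : Fin 2,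
      W α β =
        (1 / (((n : ℂ) + 1) * ((n : ℂ) + 2))) •
            pderiv α (pderiv β (∑ γ : Fin 2, ∑ δ : Fin 2, X γ * X δ * W γ δ))
        - (1 / ((n : ℂ) * ((n : ℂ) + 2))) •
            (yh α * pderiv β (∑ δ : Fin 2, X δ * Dof W δ)
              + yh β * pderiv α (∑ δ : Fin 2, X δ * Dof W δ))
        + (1 / ((n : ℂ) * ((n : ℂ) + 1))) •
            (yh α * yh β * (pderiv 0 (Dof W 1) - pderiv 1 (Dof W 0))) := by
  have h0 : (n : ℂ) ≠ 0 := Nat.cast_ne_zero.mpr (by omega)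
  have h1 : (n : ℂ) + 1 ≠ 0 := by
    have : ((n + 1 : ℕ) : ℂ) ≠ 0 := Nat.cast_ne_zero.mpr (by omega)
    push_cast at this; exact this
  have h2 : (n : ℂ) + 2 ≠ 0 := by
    have : ((n + 2 : ℕ) : ℂ) ≠ 0 := Nat.cast_ne_zero.mpr (by omega)
    push_cast at this; exact this
  have hs : (n : ℂ) * ((n : ℂ) + 1) * ((n : ℂ) + 2) ≠ 0 :=
    mul_ne_zero (mul_ne_zero h0 h1) h2
  have e1 : ((n:ℂ) * ((n:ℂ) + 1) * ((n:ℂ) + 2)) * (1 / (((n:ℂ) + 1) * ((n:ℂ) + 2)))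
      = (n:ℂ) := by field_simp; try ring
  have e2 : ((n:ℂ) * ((n:ℂ) + 1) * ((n:ℂ) + 2)) * (1 / ((n:ℂ) * ((n:ℂ) + 2)))
      = (n:ℂ) + 1 := by field_simp; try ring
  have e3 : ((n:ℂ) * ((n:ℂ) + 1) * ((n:ℂ) + 2)) * (1 / ((n:ℂ) * ((n:ℂ) + 1)))
      = (n:ℂ) + 2 := by field_simp; try ring
  have hA := euler₂ (hhom 0 0)
  have hB := euler₂ (hhom 0 1)
  have hC := euler₂ (hhom 1 1)
  have hA0 := euler_d0 hA
  have hA1 := euler_d1 hA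
  have hB0 := euler_d0 hB
  have hB1 := euler_d1 hB
  have hC0 := euler_d0 hC
  have hC1 := euler_d1 hC
  have hsym' : W 1 0 = W 0 1 := hsym.symm
  intro α β
  have cancel : ∀ p q : MvPolynomial (Fin 2) ℂ,
      ((n:ℂ) * ((n:ℂ) + 1) * ((n:ℂ) + 2)) • p
        = ((n:ℂ) * ((n:ℂ) + 1) * ((n:ℂ) + 2)) • q → p = q :=
    fun p q h => smul_right_injective (MvPolynomial (Fin 2) ℂ) hs h
  apply cancel
  rw [smul_add, smul_sub, smul_smul, smul_smul, smul_smul, e1, e2, e3]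
  fin_cases α <;> fin_cases β <;>
    simp only [Fin.zero_eta, Fin.mk_one, Fin.isValue, Fin.sum_univ_two, Dof, yh0, yh1,
      hsym', map_add, map_sub, pderiv_mul, pderiv_X_self,
      pd01, pd10, one_mul, zero_mul, mul_zero, zero_add, add_zero, mul_one,
      pcomm10, smul_eq_C_mul, map_mul, map_one, map_ofNat]
  · linear_combination (-(3*(C (n:ℂ)) + (C (n:ℂ))^2)) * hA - (C (n:ℂ)) * X 0 * hA0
      - (2 + C (n:ℂ)) * X 1 * hA1 + 2 * X 1 * hB0
  · linear_combination (-(3*(C (n:ℂ)) + (C (n:ℂ))^2)) * hB + X 0 * hA1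
      - (1 + C (n:ℂ)) * X 0 * hB0 - (1 + C (n:ℂ)) * X 1 * hB1 + X 1 * hC0
  · linear_combination (-(3*(C (n:ℂ)) + (C (n:ℂ))^2)) * hB + X 0 * hA1
      - (1 + C (n:ℂ)) * X 0 * hB0 - (1 + C (n:ℂ)) * X 1 * hB1 + X 1 * hC0
  · linear_combination (-(3*(C (n:ℂ)) + (C (n:ℂ))^2)) * hC + 2 * X 0 * hB1
      - (2 + C (n:ℂ)) * X 0 * hC0 - (C (n:ℂ)) * X 1 * hC1

end
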